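/- For every n ≥ 1, the operators 𝔏_α^[n] and 𝔏_β^[n] satisfy the same algebraic relations as L_α and L_β: (𝔏_α^[n])² = 𝔏_β^[n]·𝔏_α^[n] = −𝔏_α^[n] and (𝔏_β^[n])² = 𝔏_α^[n]·𝔏_β^[n] = −𝔏_β^[n]. -/

import Mathlib

open Matrix


/-- The Markov generator `L_α = [[-1, 0], [1, 0]]`. -/
noncomputable def Lalpha : Matrix (Fin 2) (Fin 2) ℝ := !![-1, 0; 1, 0]

/-- The Markov generator `L_β = [[0, 1], [0, -1]]`. -/
noncomputable def Lbeta : Matrix (Fin 2) (Fin 2) ℝ := !![0, 1; 0, -1]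

/-- `X^(A)`: the operator on the `n`-fold tensor power `(ℝ²)^⊗n` (indexed by functions
`Fin n → Fin 2`) acting as `X` on the tensor factors in `A` and as the identity elsewhere:
`(X^(A))_{f,g} = (∏_{i ∈ A} X_{f(i),g(i)}) · (∏_{j ∉ A} [f(j) = g(j)])`. -/
noncomputable def opOn {n : ℕ} (X : Matrix (Fin 2) (Fin 2) ℝ) (A : Finset (Fin n)) :
    Matrix (Fin n → Fin 2) (Fin n → Fin 2) ℝ :=
  fun f g => (∏ i ∈ A, X (f i) (g i)) * ∏ j ∈ Aᶜ, (if f j = g j then (1 : ℝ) else 0)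

/-- `𝔏_X^[n] := ∑_{∅ ≠ A ⊆ Fin n} X^(A)`. -/
noncomputable def frakL (n : ℕ) (X : Matrix (Fin 2) (Fin 2) ℝ) :
    Matrix (Fin n → Fin 2) (Fin n → Fin 2) ℝ :=
  ∑ A ∈ Finset.univ.filter (fun A : Finset (Fin n) => A.Nonempty), opOn X A

/-!
Expanding the product `∏ i, (X + 1) (f i) (g i)` over the set of factors where `X` is chosen
shows `∑_{A ⊆ Fin n} X^(A) = (X + 1)^{⊗n}`, i.e. `𝔏_X^[n] + 1 = (X + 1)^{⊗n}`.
In any ring `Y X = -X` is equivalent to `(Y + 1)(X + 1) = Y + 1`, and the latter is preserved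
by Kronecker powers since they are multiplicative. So each relation of this shape between
`L_α` and `L_β` lifts to `𝔏_α^[n]` and `𝔏_β^[n]`.
-/

theorem mul_eq_neg_iff_add_one_mul_add_one {R : Type*} [Ring R] {x y : R} :
    y * x = -x ↔ (y + 1) * (x + 1) = y + 1 := by
  rw [mul_add_one, add_eq_right, add_one_mul, add_eq_zero_iff_eq_neg]

section KroneckerPow

variable {σ R : Type*} [CommSemiring R]

def kroneckerPow (ι : Type*) [Fintype ι] (M : Matrix σ σ R) : Matrix (ι → σ) (ι → σ) R :=
  of fun f g => ∏ i, M (f i) (g i)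

theorem kroneckerPow_mul {ι : Type*} [Fintype ι] [DecidableEq ι] [Fintype σ]
    (M N : Matrix σ σ R) :
    kroneckerPow ι M * kroneckerPow ι N = kroneckerPow ι (M * N) := by
  ext f g
  simp only [kroneckerPow, mul_apply, of_apply, Fintype.prod_sum, Finset.prod_mul_distrib]

end KroneckerPow

theorem opOn_empty {n : ℕ} (X : Matrix (Fin 2) (Fin 2) ℝ) : opOn X (∅ : Finset (Fin n)) = 1 := by
  ext f g
  simp [opOn, one_apply, Finset.prod_boole, funext_iff]

theorem sum_opOn (n : ℕ) (X : Matrix (Fin 2) (Fin 2) ℝ) :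
    ∑ A : Finset (Fin n), opOn X A = kroneckerPow (Fin n) (X + 1) := by
  ext f g
  simp only [Matrix.sum_apply, opOn, kroneckerPow, of_apply, Matrix.add_apply, Matrix.one_apply,
    Fintype.prod_add]

theorem frakL_add_one (n : ℕ) (X : Matrix (Fin 2) (Fin 2) ℝ) :
    frakL n X + 1 = kroneckerPow (Fin n) (X + 1) := by
  have h : Finset.univ.filter (fun A : Finset (Fin n) => A.Nonempty) = Finset.univ.erase ∅ := by
    ext A; simp [Finset.nonempty_iff_ne_empty]
  rw [← sum_opOn, frakL, h, ← opOn_empty X, Finset.sum_erase_add _ _ (Finset.mem_univ _)]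

theorem frakL_mul_frakL_of_mul_eq_neg (n : ℕ) {X Y : Matrix (Fin 2) (Fin 2) ℝ}
    (h : Y * X = -X) : frakL n Y * frakL n X = -frakL n X := by
  rw [mul_eq_neg_iff_add_one_mul_add_one] at h ⊢
  rw [frakL_add_one, frakL_add_one, kroneckerPow_mul, h]

theorem Lalpha_mul_Lalpha : Lalpha * Lalpha = -Lalpha := by
  ext i j; fin_cases i <;> fin_cases j <;> simp [Lalpha, mul_apply, Fin.sum_univ_two]

theorem Lbeta_mul_Lalpha : Lbeta * Lalpha = -Lalpha := by
  ext i j; fin_cases i <;> fin_cases j <;> simp [Lalpha, Lbeta, mul_apply, Fin.sum_univ_two]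

theorem Lbeta_mul_Lbeta : Lbeta * Lbeta = -Lbeta := by
  ext i j; fin_cases i <;> fin_cases j <;> simp [Lbeta, mul_apply, Fin.sum_univ_two]

theorem Lalpha_mul_Lbeta : Lalpha * Lbeta = -Lbeta := by
  ext i j; fin_cases i <;> fin_cases j <;> simp [Lalpha, Lbeta, mul_apply, Fin.sum_univ_two]

theorem frakL_relations_general (n : ℕ) :
    (frakL n Lalpha) ^ 2 = frakL n Lbeta * frakL n Lalpha ∧
    frakL n Lbeta * frakL n Lalpha = -frakL n Lalpha ∧
    (frakL n Lbeta) ^ 2 = frakL n Lalpha * frakL n Lbeta ∧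
    frakL n Lalpha * frakL n Lbeta = -frakL n Lbeta := by
  have hαα := frakL_mul_frakL_of_mul_eq_neg n Lalpha_mul_Lalpha
  have hβα := frakL_mul_frakL_of_mul_eq_neg n Lbeta_mul_Lalpha
  have hββ := frakL_mul_frakL_of_mul_eq_neg n Lbeta_mul_Lbeta
  have hαβ := frakL_mul_frakL_of_mul_eq_neg n Lalpha_mul_Lbeta
  exact ⟨by rw [sq, hαα, hβα], hβα, by rw [sq, hββ, hαβ], hαβ⟩

/-- For every `n ≥ 1`, the operators `𝔏_α^[n]`, `𝔏_β^[n]` satisfy the same relations as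
`L_α`, `L_β`: `(𝔏_α^[n])² = 𝔏_β^[n]·𝔏_α^[n] = −𝔏_α^[n]` and
`(𝔏_β^[n])² = 𝔏_α^[n]·𝔏_β^[n] = −𝔏_β^[n]`. -/
theorem frakL_relations (n : ℕ) (hn : 1 ≤ n) :
    (frakL n Lalpha) ^ 2 = frakL n Lbeta * frakL n Lalpha ∧
    frakL n Lbeta * frakL n Lalpha = -frakL n Lalpha ∧
    (frakL n Lbeta) ^ 2 = frakL n Lalpha * frakL n Lbeta ∧
    frakL n Lalpha * frakL n Lbeta = -frakL n Lbeta :=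
  frakL_relations_general n
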